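/- Let x = X_1 be the generating operator of the complex group algebra of the free group F_N on N ≥ 1 generators, and let τ be the canonical trace (coefficient at the identity). For all n ≥ 1 and all k' ≥ 0, τ(x^{n+k'} · X_n) = Σ_{i=0}^{n−1} binom(n,i)·(2N−1)^i · τ(x^{k'} · X_{2n−2i}) + 2N·(2N−1)^{n−1} · τ(x^{k'}). -/

import Mathlib

/-!
Left multiplication by `x` sends a reduced word `w ≠ 1` to its `2N` neighbours: one of them
cancels the first letter of `w`, the other `2N - 1` lengthen it. Hence
`x X_m = X_{m+1} + (2N-1) X_{m-1}` for `m ≥ 2` and `x X_1 = X_2 + 2N`. So on the span of the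
`X_m` with `m` large, `x` acts as `1 + (2N-1) S` for a shift `S`, and `x^j X_m` expands
binomially while `j < m`. For `x^n X_n` the last multiplication meets `X_1`, where the
defect `2N = (2N-1) + 1` contributes the extra constant `2N (2N-1)^{n-1}`; multiplying by
`x^{k'}` and applying `τ` gives the identity.
-/

/-- `Xop N n` is the operator `X_n`: the sum, in the complex group algebra
`ℂ[F_N] = MonoidAlgebra ℂ (FreeGroup (Fin N))`, of the basis elements of all
words `w` whose reduced word has length `n`. Note `Xop N 0 = 1`. -/
noncomputable def Xop (N n : ℕ) : MonoidAlgebra ℂ (FreeGroup (Fin N)) :=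
  ∑ᶠ w ∈ {w : FreeGroup (Fin N) | (FreeGroup.toWord w).length = n},
    MonoidAlgebra.of ℂ (FreeGroup (Fin N)) w

/-- The canonical trace `τ` on `ℂ[F_N]`: the coefficient at the identity. -/
noncomputable def tr {N : ℕ} (a : MonoidAlgebra ℂ (FreeGroup (Fin N))) : ℂ := a.coeff 1

open FreeGroup MonoidAlgebra Finset

section Binomial
variable {M : Type*} [AddCommMonoid M]

-- Pascal's rule: `(1 + q S) ^ j (1 + q S) = (1 + q S) ^ (j + 1)` for the shift `S w = w ∘ succ`,
-- evaluated at `0`.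
theorem sum_range_choose_mul_pow_smul_add (w : ℕ → M) (q j : ℕ) :
    ∑ i ∈ range (j + 1), (j.choose i * q ^ i) • (w i + q • w (i + 1)) =
      ∑ i ∈ range (j + 2), ((j + 1).choose i * q ^ i) • w i := by
  have pascal (i : ℕ) : (j + 1).choose (i + 1) * q ^ (i + 1) =
      j.choose (i + 1) * q ^ (i + 1) + j.choose i * q ^ i * q := by
    rw [Nat.choose_succ_succ', pow_succ]; ring
  have shift : ∑ i ∈ range (j + 1), (j.choose i * q ^ i) • w i =
      ∑ i ∈ range (j + 1), (j.choose (i + 1) * q ^ (i + 1)) • w (i + 1) + w 0 := by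
    rw [sum_range_succ', sum_range_succ, Nat.choose_succ_self]
    simp only [Nat.choose_zero_right, pow_zero, mul_one, one_smul, zero_mul, zero_nsmul, add_zero]
  rw [sum_range_succ' _ (j + 1), Nat.choose_zero_right, pow_zero, mul_one, one_smul]
  simp only [pascal, add_smul, sum_add_distrib, smul_add, smul_smul, shift]
  abel
end Binomial

namespace FreeGroup
variable {α : Type*} [DecidableEq α]

theorem finite_setOf_length_toWord_eq [Finite α] (n : ℕ) :
    {w : FreeGroup α | w.toWord.length = n}.Finite :=
  (List.finite_length_eq _ n).preimage toWord_injective.injOn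

theorem toWord_inv_mk_singleton_mul {w : FreeGroup α} {y : α × Bool}
    {t : List (α × Bool)} (hw : w.toWord = y :: t) (a : α × Bool) :
    ((mk [a])⁻¹ * w).toWord = if a = y then t else (a.1, !a.2) :: y :: t := by
  have hyt : reduce (y :: t) = y :: t := hw ▸ reduce_toWord w
  rw [toWord_mul, toWord_inv, toWord_mk, reduce_singleton, hw]
  simp only [invRev, List.map_cons, List.map_nil, List.reverse_cons, List.reverse_nil,
    List.nil_append, List.cons_append, reduce.cons, hyt]
  simp [Prod.ext_iff]

theorem length_toWord_inv_mk_singleton (a : α × Bool) : (mk [a])⁻¹.toWord.length = 1 := by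
  simp [toWord_mk, invRev]

theorem toWord_eq_singleton_iff {w : FreeGroup α} {a : α × Bool} :
    w.toWord = [a] ↔ w = mk [a] := by
  rw [← toWord_inj, toWord_mk, reduce_singleton]

end FreeGroup

section Xop
variable {N : ℕ}

theorem Xop_eq_sum (n : ℕ) :
    Xop N n = ∑ w ∈ (finite_setOf_length_toWord_eq n).toFinset, single w 1 := by
  rw [Xop, ← finsum_mem_coe_finset, Set.Finite.coe_toFinset]
  rfl

theorem coeff_Xop (n : ℕ) (w : FreeGroup (Fin N)) :
    (Xop N n).coeff w = if w.toWord.length = n then 1 else 0 := by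
  classical
  simp [Xop_eq_sum, Finsupp.single_apply]

theorem Xop_zero : Xop N 0 = 1 := by
  ext w
  simp [coeff_Xop, one_def, Finsupp.single_apply, eq_comm]

theorem Xop_one : Xop N 1 = ∑ a : Fin N × Bool, single (mk [a]) 1 := by
  have hS : (finite_setOf_length_toWord_eq 1).toFinset =
      univ.image fun a : Fin N × Bool ↦ mk [a] := by
    ext w
    simp [List.length_eq_one_iff, toWord_eq_singleton_iff, eq_comm]
  rw [Xop_eq_sum, hS, sum_image fun a _ b _ h ↦ by simpa [toWord_mk] using congrArg toWord h]

theorem coeff_Xop_one_mul (f : MonoidAlgebra ℂ (FreeGroup (Fin N))) (w : FreeGroup (Fin N)) :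
    (Xop N 1 * f).coeff w = ∑ a : Fin N × Bool, f.coeff ((mk [a])⁻¹ * w) := by
  simp [Xop_one, sum_mul]

theorem coeff_one_Xop_one_mul_Xop (m : ℕ) :
    (Xop N 1 * Xop N m).coeff 1 = (2 * N) • if 1 = m then (1 : ℂ) else 0 := by
  simp only [coeff_Xop_one_mul, coeff_Xop, mul_one, length_toWord_inv_mk_singleton, sum_const,
    card_univ, Fintype.card_prod, Fintype.card_fin, Fintype.card_bool, mul_comm]

theorem coeff_Xop_one_mul_Xop_of_toWord_eq_cons {w : FreeGroup (Fin N)} {y : Fin N × Bool}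
    {t : List (Fin N × Bool)} (hw : w.toWord = y :: t) (m : ℕ) :
    (Xop N 1 * Xop N m).coeff w =
      (if t.length = m then 1 else 0) +
        (2 * N - 1) • if t.length + 2 = m then (1 : ℂ) else 0 := by
  have hrest : ∀ a ∈ ({y}ᶜ : Finset _), (Xop N m).coeff ((mk [a])⁻¹ * w) =
      if t.length + 2 = m then 1 else 0 := by
    intro a ha
    have hay : a ≠ y := by simpa using ha
    simp only [coeff_Xop, toWord_inv_mk_singleton_mul hw, hay, if_false, List.length_cons]
  rw [coeff_Xop_one_mul, Fintype.sum_eq_add_sum_compl y, sum_congr rfl hrest, sum_const,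
    card_compl, card_singleton, coeff_Xop, toWord_inv_mk_singleton_mul hw, if_pos rfl,
    Fintype.card_prod, Fintype.card_fin, Fintype.card_bool, mul_comm]

theorem Xop_one_mul_Xop {m : ℕ} (hm : 2 ≤ m) :
    Xop N 1 * Xop N m = Xop N (m + 1) + (2 * N - 1) • Xop N (m - 1) := by
  ext w
  simp only [coeff_add, Finsupp.add_apply, coeff_smul_apply, coeff_Xop]
  rcases hw : w.toWord with _ | ⟨y, t⟩
  · rw [toWord_eq_nil_iff] at hw
    subst hw
    rw [coeff_one_Xop_one_mul_Xop, List.length_nil, if_neg (by omega), if_neg (by omega),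
      if_neg (by omega), smul_zero, smul_zero, add_zero]
  · have e₁ : t.length + 1 = m + 1 ↔ t.length = m := by omega
    have e₂ : t.length + 1 = m - 1 ↔ t.length + 2 = m := by omega
    rw [coeff_Xop_one_mul_Xop_of_toWord_eq_cons hw, List.length_cons, if_congr e₁ rfl rfl,
      if_congr e₂ rfl rfl]

theorem Xop_one_mul_Xop_one : Xop N 1 * Xop N 1 = Xop N 2 + (2 * N) • 1 := by
  ext w
  rw [← Xop_zero]
  simp only [coeff_add, Finsupp.add_apply, coeff_smul_apply, coeff_Xop]
  rcases hw : w.toWord with _ | ⟨y, t⟩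
  · rw [toWord_eq_nil_iff] at hw
    subst hw
    simp [coeff_one_Xop_one_mul_Xop]
  · simp [coeff_Xop_one_mul_Xop_of_toWord_eq_cons hw]

theorem Xop_one_pow_mul_Xop {j m : ℕ} (hjm : j < m) :
    Xop N 1 ^ j * Xop N m =
      ∑ i ∈ range (j + 1), (j.choose i * (2 * N - 1) ^ i) • Xop N (m + j - 2 * i) := by
  induction j with
  | zero => simp
  | succ j ih =>
    have step : ∀ i ∈ range (j + 1),
        Xop N 1 * ((j.choose i * (2 * N - 1) ^ i) • Xop N (m + j - 2 * i)) =
          (j.choose i * (2 * N - 1) ^ i) • (Xop N (m + (j + 1) - 2 * i) +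
            (2 * N - 1) • Xop N (m + (j + 1) - 2 * (i + 1))) := by
      intro i hi
      have hij := mem_range.1 hi
      rw [mul_smul_comm, Xop_one_mul_Xop (by omega),
        show m + j - 2 * i + 1 = m + (j + 1) - 2 * i by omega,
        show m + j - 2 * i - 1 = m + (j + 1) - 2 * (i + 1) by omega]
    rw [pow_succ', mul_assoc, ih (by omega), mul_sum, sum_congr rfl step,
      sum_range_choose_mul_pow_smul_add fun i ↦ Xop N (m + (j + 1) - 2 * i)]

theorem Xop_one_pow_mul_Xop_self (hN : 1 ≤ N) {n : ℕ} (hn : 1 ≤ n) :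
    Xop N 1 ^ n * Xop N n =
      ∑ i ∈ range n, (n.choose i * (2 * N - 1) ^ i) • Xop N (2 * n - 2 * i) +
        (2 * N * (2 * N - 1) ^ (n - 1)) • 1 := by
  obtain ⟨p, rfl⟩ : ∃ p, n = p + 1 := ⟨n - 1, by omega⟩
  set q := 2 * N - 1
  have hq : 2 * N = q + 1 := by omega
  set w : ℕ → MonoidAlgebra ℂ (FreeGroup (Fin N)) := fun i ↦ Xop N (2 * (p + 1) - 2 * i)
  have hw₂ : w p = Xop N 2 := congrArg (Xop N) (by omega)
  have hw₀ : w (p + 1) = 1 := by simp only [w, Nat.sub_self, Xop_zero]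
  have step : ∀ i ∈ range p, Xop N 1 * ((p.choose i * q ^ i) • Xop N (p + 1 + p - 2 * i)) =
      (p.choose i * q ^ i) • (w i + q • w (i + 1)) := by
    intro i hi
    have hip := mem_range.1 hi
    rw [mul_smul_comm, Xop_one_mul_Xop (by omega),
      show p + 1 + p - 2 * i + 1 = 2 * (p + 1) - 2 * i by omega,
      show p + 1 + p - 2 * i - 1 = 2 * (p + 1) - 2 * (i + 1) by omega]
  have last : Xop N 1 * ((p.choose p * q ^ p) • Xop N (p + 1 + p - 2 * p)) =
      (p.choose p * q ^ p) • (w p + q • w (p + 1)) + q ^ p • 1 := by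
    rw [mul_smul_comm, show p + 1 + p - 2 * p = 1 by omega, Xop_one_mul_Xop_one, hw₂, hw₀, hq,
      Nat.choose_self, one_mul]
    module
  rw [pow_succ', mul_assoc, Xop_one_pow_mul_Xop (Nat.lt_succ_self p), mul_sum, sum_range_succ,
    sum_congr rfl step, last, ← add_assoc, ← sum_range_succ, sum_range_choose_mul_pow_smul_add,
    sum_range_succ _ (p + 1), add_assoc, Nat.choose_self, one_mul, hw₀, ← add_smul, hq,
    Nat.add_sub_cancel]
  congr 2
  ring

end Xop

theorem stmt_9 (N : ℕ) (hN : 1 ≤ N) (n k' : ℕ) (hn : 1 ≤ n) :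
    tr ((Xop N 1) ^ (n + k') * Xop N n) =
      (∑ i ∈ Finset.range n,
        (n.choose i * (2 * N - 1) ^ i : ℕ) * tr ((Xop N 1) ^ k' * Xop N (2 * n - 2 * i)))
      + (2 * N * (2 * N - 1) ^ (n - 1) : ℕ) * tr ((Xop N 1) ^ k') := by
  rw [add_comm n k', pow_add, mul_assoc, Xop_one_pow_mul_Xop_self hN hn, mul_add, mul_sum]
  simp only [mul_smul_comm, mul_one, tr, coeff_add, Finsupp.add_apply, coeff_sum,
    Finsupp.finsetSum_apply, coeff_smul_apply]
  simp only [nsmul_eq_mul]
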